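/- For every d ∈ ℕ, every η ∈ ℝ^d, and every A ∈ GL(d,ℝ): ∑_{k∈ℤ^d∖{0}} (1 + |η + A k|)^{-(d+1)} ≤ (d+1)·2^{3+4d}·(1+|η|)·max{‖A^{-1}‖, ‖A^{-1}‖^{d+1}}. -/

import Mathlib

open MeasureTheory Matrix
open scoped ENNReal

noncomputable section

/-- `ℝ^d` with the Euclidean norm. -/
abbrev Ed (d : ℕ) : Type := EuclideanSpace ℝ (Fin d)

/-- An integer vector, viewed as an element of `ℝ^d`. -/
def zVec {d : ℕ} (k : Fin d → ℤ) : Ed d := WithLp.toLp 2 (fun i => (k i : ℝ))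

/-- A matrix acting on `ℝ^d`. -/
def matVec {d : ℕ} (A : Matrix (Fin d) (Fin d) ℝ) (x : Ed d) : Ed d :=
  WithLp.toLp 2 (fun i => ∑ j, A i j * x j)

/-- The operator norm of a matrix, with respect to the Euclidean norm. -/
def matOpNorm {d : ℕ} (A : Matrix (Fin d) (Fin d) ℝ) : ℝ :=
  ⨆ x : Metric.closedBall (0 : Ed d) 1, ‖matVec A (x : Ed d)‖

/-!
The vectors `A k`, `k ∈ ℤ^d`, are `1/‖A⁻¹‖`-separated, and for `k ≠ 0` they have norm at least
`1/‖A⁻¹‖`. Group the terms into dyadic shells `2^j ≤ 1 + |η + A k| < 2^(j+1)`. Comparing volumes of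
disjoint balls, shell `j` holds at most `(4·2^j‖A⁻¹‖ + 1)^d` points, each contributing at most
`2^(-j(d+1))`; and a nonempty shell forces `2^(-j) ≤ 2‖A⁻¹‖(1 + |η|)`. Hence shell `j` contributes
`O(2^(-j) (1 + |η|) max(‖A⁻¹‖, ‖A⁻¹‖^(d+1)))`, and the geometric series gives the bound.
-/
open Module Finset

theorem card_le_of_pairwise_le_dist {E ι : Type*} [NormedAddCommGroup E] [NormedSpace ℝ E]
    [FiniteDimensional ℝ E] {s : Finset ι} {p : ι → E} {c : E} {R δ : ℝ} (hR : 0 ≤ R)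
    (hδ : 0 < δ) (hsep : (s : Set ι).Pairwise fun i j => δ ≤ dist (p i) (p j))
    (hs : ∀ i ∈ s, dist (p i) c ≤ R) :
    (#s : ℝ) ≤ (2 * R / δ + 1) ^ finrank ℝ E := by
  borelize E
  set μ : Measure E := Measure.addHaar
  have hdisj : (s : Set ι).PairwiseDisjoint fun i => Metric.ball (p i) (δ / 2) :=
    hsep.mono' fun i j h => Metric.ball_disjoint_ball (by linarith)
  have hsub : (⋃ i ∈ s, Metric.ball (p i) (δ / 2)) ⊆ Metric.ball c (R + δ / 2) := by
    simp only [Set.iUnion_subset_iff]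
    intro i hi x hx
    rw [Metric.mem_ball] at hx ⊢
    linarith [dist_triangle x (p i) c, hs i hi]
  have hvol : (#s : ℝ≥0∞) * ENNReal.ofReal ((δ / 2) ^ finrank ℝ E) * μ (Metric.ball 0 1)
      ≤ ENNReal.ofReal ((R + δ / 2) ^ finrank ℝ E) * μ (Metric.ball 0 1) :=
    calc (#s : ℝ≥0∞) * ENNReal.ofReal ((δ / 2) ^ finrank ℝ E) * μ (Metric.ball 0 1)
        = μ (⋃ i ∈ s, Metric.ball (p i) (δ / 2)) := by
          rw [measure_biUnion_finset hdisj fun i _ => measurableSet_ball,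
            Finset.sum_congr rfl fun i _ => μ.addHaar_ball_of_pos _ (half_pos hδ),
            Finset.sum_const, nsmul_eq_mul, mul_assoc]
      _ ≤ μ (Metric.ball c (R + δ / 2)) := measure_mono hsub
      _ = _ := μ.addHaar_ball_of_pos _ (by positivity)
  rw [ENNReal.mul_le_mul_iff_left (Metric.measure_ball_pos μ _ one_pos).ne'
    measure_ball_lt_top.ne, ← ENNReal.ofReal_natCast, ← ENNReal.ofReal_mul (by positivity),
    ENNReal.ofReal_le_ofReal_iff (by positivity), ← le_div_iff₀ (by positivity), ← div_pow] at hvol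
  rwa [show (R + δ / 2) / (δ / 2) = 2 * R / δ + 1 by field_simp] at hvol

def dyadicShell {ι : Type*} (g : ι → ℝ) (j : ℕ) : Set ι := {i | 2 ^ j ≤ g i ∧ g i < 2 ^ (j + 1)}

theorem tsum_le_tsum_tsum_indicator_dyadicShell {ι : Type*} {g : ι → ℝ} (hg : ∀ i, 1 ≤ g i)
    (f : ι → ℝ≥0∞) : ∑' i, f i ≤ ∑' j, ∑' i, (dyadicShell g j).indicator f i := by
  rw [ENNReal.tsum_comm]
  refine ENNReal.tsum_le_tsum fun i => ?_
  obtain ⟨j, hj⟩ := exists_nat_pow_near (hg i) one_lt_two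
  calc f i = (dyadicShell g j).indicator f i :=
        (Set.indicator_of_mem (show i ∈ dyadicShell g j from hj) f).symm
    _ ≤ ∑' j, (dyadicShell g j).indicator f i := ENNReal.le_tsum j

theorem pow_le_max_pow_succ {M : ℝ} (hM : 0 ≤ M) {n : ℕ} (hn : 1 ≤ n) :
    M ^ n ≤ max M (M ^ (n + 1)) := by
  rcases le_total M 1 with h | h
  · exact le_max_of_le_left (pow_le_of_le_one hM h (by omega))
  · exact le_max_of_le_right (pow_le_pow_right₀ h n.le_succ)

theorem four_mul_add_pow_le {n : ℕ} (hn : 1 ≤ n) {M E u : ℝ} (hM : 0 ≤ M) (hE : 0 ≤ E)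
    (hu₀ : 0 ≤ u) (hu₁ : u ≤ 1) (huM : u ≤ 2 * M * (1 + E)) :
    (4 * M + u) ^ n ≤ 2 * 8 ^ n * (1 + E) * max M (M ^ (n + 1)) := by
  rcases le_total u (4 * M) with h | h
  · calc (4 * M + u) ^ n ≤ (8 * M) ^ n := by gcongr; linarith
      _ = 8 ^ n * M ^ n := mul_pow _ _ _
      _ ≤ 8 ^ n * max M (M ^ (n + 1)) := by gcongr; exact pow_le_max_pow_succ hM hn
      _ ≤ 8 ^ n * max M (M ^ (n + 1)) * (2 * (1 + E)) := by
        apply le_mul_of_one_le_right (by positivity); linarith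
      _ = 2 * 8 ^ n * (1 + E) * max M (M ^ (n + 1)) := by ring
  · calc (4 * M + u) ^ n ≤ (2 * u) ^ n := by gcongr; linarith
      _ = 2 ^ n * u ^ n := mul_pow _ _ _
      _ ≤ 2 ^ n * u := by gcongr; exact pow_le_of_le_one hu₀ hu₁ (by omega)
      _ ≤ 2 ^ n * (2 * M * (1 + E)) := by gcongr
      _ = 2 * 2 ^ n * (1 + E) * M := by ring
      _ ≤ 2 * 8 ^ n * (1 + E) * max M (M ^ (n + 1)) := by
        gcongr
        exacts [by norm_num, le_max_left _ _]

section SeparatedFamily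

variable {E ι : Type*} [NormedAddCommGroup E] [NormedSpace ℝ E] [FiniteDimensional ℝ E]
  {p : ι → E} {M : ℝ}

theorem card_le_of_forall_norm_add_le (η : E) (hM : 0 < M)
    (hsep : Pairwise fun i j => 1 ≤ M * ‖p i - p j‖) {s : Finset ι} {R : ℝ} (hR : 0 ≤ R)
    (hs : ∀ i ∈ s, ‖η + p i‖ ≤ R) :
    (#s : ℝ) ≤ (2 * R * M + 1) ^ finrank ℝ E := by
  have hsep' : (s : Set ι).Pairwise fun i j => 1 / M ≤ dist (p i) (p j) :=
    fun i _ j _ hij => by dsimp only; rw [dist_eq_norm, div_le_iff₀' hM]; exact hsep hij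
  have hs' : ∀ i ∈ s, dist (p i) (-η) ≤ R := fun i hi => by
    rw [dist_eq_norm, sub_neg_eq_add, add_comm]; exact hs i hi
  simpa only [div_div_eq_mul_div, div_one] using
    card_le_of_pairwise_le_dist hR (by positivity) hsep' hs'

theorem sum_inv_pow_le_of_forall_mem_dyadicShell (η : E) (hM : 0 ≤ M)
    (hsep : Pairwise fun i j => 1 ≤ M * ‖p i - p j‖) (hnorm : ∀ i, 1 ≤ M * ‖p i‖) {j : ℕ}
    {s : Finset ι} (hs : ∀ i ∈ s, i ∈ dyadicShell (fun i => 1 + ‖η + p i‖) j) :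
    ∑ i ∈ s, ((1 + ‖η + p i‖) ^ (finrank ℝ E + 1))⁻¹
      ≤ 2 * 8 ^ finrank ℝ E * (1 + ‖η‖) * max M (M ^ (finrank ℝ E + 1)) * (1 / 2) ^ j := by
  set n := finrank ℝ E
  set t : ℝ := 2 ^ j
  rcases s.eq_empty_or_nonempty with rfl | ⟨i₀, hi₀⟩
  · simp only [Finset.sum_empty]
    positivity
  have hM : 0 < M := hM.lt_of_ne (by rintro rfl; linarith [hnorm i₀])
  have hn : 1 ≤ n :=
    Module.finrank_pos_iff_exists_ne_zero.mpr ⟨p i₀, fun h => absurd (hnorm i₀) (by simp [h])⟩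
  have ht : 1 ≤ t := one_le_pow₀ one_le_two
  have hlt : ∀ i ∈ s, ‖η + p i‖ < 2 * t := fun i hi => by
    have := (hs i hi).2
    rw [pow_succ] at this
    linarith
  have hcard : (#s : ℝ) ≤ (2 * (2 * t) * M + 1) ^ n :=
    card_le_of_forall_norm_add_le η hM hsep (by positivity) fun i hi => (hlt i hi).le
  have hterm : ∀ i ∈ s, ((1 + ‖η + p i‖) ^ (n + 1))⁻¹ ≤ (t ^ (n + 1))⁻¹ := fun i hi => by
    gcongr
    exact (hs i hi).1
  have hu : t⁻¹ ≤ 2 * M * (1 + ‖η‖) := by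
    have htri : ‖p i₀‖ ≤ ‖η + p i₀‖ + ‖η‖ := by
      simpa using norm_sub_le (η + p i₀) η
    rw [inv_le_iff_one_le_mul₀ (by positivity)]
    calc 1 ≤ M * ‖p i₀‖ := hnorm i₀
      _ ≤ M * (2 * t + 2 * t * ‖η‖) := by
        gcongr
        nlinarith [hlt i₀ hi₀, norm_nonneg η]
      _ = 2 * M * (1 + ‖η‖) * t := by ring
  calc ∑ i ∈ s, ((1 + ‖η + p i‖) ^ (n + 1))⁻¹
      ≤ #s • (t ^ (n + 1))⁻¹ := Finset.sum_le_card_nsmul _ _ _ hterm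
    _ = #s * (t ^ (n + 1))⁻¹ := nsmul_eq_mul _ _
    _ ≤ (2 * (2 * t) * M + 1) ^ n * (t ^ (n + 1))⁻¹ := by gcongr
    _ = (4 * M + t⁻¹) ^ n * t⁻¹ := by
      rw [show 4 * M + t⁻¹ = (2 * (2 * t) * M + 1) / t by field_simp; ring, div_pow, pow_succ]
      field_simp
    _ ≤ 2 * 8 ^ n * (1 + ‖η‖) * max M (M ^ (n + 1)) * t⁻¹ := by
      gcongr
      exact four_mul_add_pow_le hn hM.le (norm_nonneg η) (by positivity)
        (inv_le_one_of_one_le₀ ht) hu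
    _ = _ := by rw [one_div, inv_pow]

theorem tsum_ofReal_inv_one_add_norm_pow_le (η : E) (hM : 0 ≤ M)
    (hsep : Pairwise fun i j => 1 ≤ M * ‖p i - p j‖) (hnorm : ∀ i, 1 ≤ M * ‖p i‖) :
    ∑' i, ENNReal.ofReal (((1 + ‖η + p i‖) ^ (finrank ℝ E + 1))⁻¹)
      ≤ ENNReal.ofReal (4 * 8 ^ finrank ℝ E * (1 + ‖η‖) * max M (M ^ (finrank ℝ E + 1))) := by
  set C := 2 * 8 ^ finrank ℝ E * (1 + ‖η‖) * max M (M ^ (finrank ℝ E + 1))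
  calc ∑' i, ENNReal.ofReal (((1 + ‖η + p i‖) ^ (finrank ℝ E + 1))⁻¹)
      ≤ ∑' j, ∑' i, (dyadicShell (fun i => 1 + ‖η + p i‖) j).indicator
          (fun i => ENNReal.ofReal (((1 + ‖η + p i‖) ^ (finrank ℝ E + 1))⁻¹)) i :=
        tsum_le_tsum_tsum_indicator_dyadicShell (fun i => by simp) _
    _ ≤ ∑' j : ℕ, ENNReal.ofReal (C * (1 / 2) ^ j) := by
      refine ENNReal.tsum_le_tsum fun j => ENNReal.summable.tsum_le_of_sum_le fun s => ?_
      classical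
      simp only [Set.indicator_apply, ← Finset.sum_filter]
      rw [← ENNReal.ofReal_sum_of_nonneg fun i _ => by positivity]
      exact ENNReal.ofReal_le_ofReal <| sum_inv_pow_le_of_forall_mem_dyadicShell η hM hsep hnorm
        fun i hi => (Finset.mem_filter.mp hi).2
    _ = ENNReal.ofReal (∑' j : ℕ, C * (1 / 2) ^ j) :=
      (ENNReal.ofReal_tsum_of_nonneg (fun j => by positivity)
        (summable_geometric_two.mul_left C)).symm
    _ = _ := by rw [tsum_mul_left, tsum_geometric_two]; congr 1; ring

end SeparatedFamily

section Matrix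

variable {d : ℕ}

theorem matVec_eq_toEuclideanCLM (A : Matrix (Fin d) (Fin d) ℝ) (x : Ed d) :
    matVec A x = toEuclideanCLM (𝕜 := ℝ) A x :=
  rfl

theorem matVec_sub (A : Matrix (Fin d) (Fin d) ℝ) (x y : Ed d) :
    matVec A (x - y) = matVec A x - matVec A y := by
  simp only [matVec_eq_toEuclideanCLM, map_sub]

theorem matOpNorm_eq_norm_toEuclideanCLM (A : Matrix (Fin d) (Fin d) ℝ) :
    matOpNorm A = ‖toEuclideanCLM (𝕜 := ℝ) A‖ := by
  rw [← ContinuousLinearMap.sSup_unitClosedBall_eq_norm, sSup_image']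
  rfl

theorem norm_le_matOpNorm_inv_mul {A : Matrix (Fin d) (Fin d) ℝ} (hA : IsUnit A.det) (x : Ed d) :
    ‖x‖ ≤ matOpNorm A⁻¹ * ‖matVec A x‖ := by
  have hx : toEuclideanCLM (𝕜 := ℝ) A⁻¹ (toEuclideanCLM (𝕜 := ℝ) A x) = x := by
    rw [← mul_apply_eq_comp, ← map_mul, nonsing_inv_mul A hA, map_one, one_apply_eq_self]
  calc ‖x‖ = ‖toEuclideanCLM (𝕜 := ℝ) A⁻¹ (toEuclideanCLM (𝕜 := ℝ) A x)‖ := by rw [hx]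
    _ ≤ ‖toEuclideanCLM (𝕜 := ℝ) A⁻¹‖ * ‖toEuclideanCLM (𝕜 := ℝ) A x‖ :=
      (toEuclideanCLM (𝕜 := ℝ) A⁻¹).le_opNorm _
    _ = matOpNorm A⁻¹ * ‖matVec A x‖ := by
      rw [matOpNorm_eq_norm_toEuclideanCLM, matVec_eq_toEuclideanCLM]

theorem zVec_sub (k l : Fin d → ℤ) : zVec (k - l) = zVec k - zVec l := by
  ext i
  simp [zVec]

theorem one_le_norm_zVec {k : Fin d → ℤ} (hk : k ≠ 0) : 1 ≤ ‖zVec k‖ := by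
  obtain ⟨i, hi⟩ := Function.ne_iff.mp hk
  calc (1 : ℝ) ≤ |(k i : ℝ)| := by exact_mod_cast Int.one_le_abs hi
    _ = ‖zVec k i‖ := rfl
    _ ≤ ‖zVec k‖ := PiLp.norm_apply_le _ i

end Matrix

/-- For every `d ∈ ℕ`, `η ∈ ℝ^d` and `A ∈ GL(d, ℝ)`:
`∑_{k ∈ ℤ^d ∖ {0}} (1 + |η + A k|)^{-(d+1)}
  ≤ (d+1) · 2^{3+4d} · (1 + |η|) · max {‖A⁻¹‖, ‖A⁻¹‖^{d+1}}`. -/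
theorem stmt18 (d : ℕ) (η : Ed d) (A : Matrix (Fin d) (Fin d) ℝ) (hA : IsUnit A.det) :
    ∑' k : {k : Fin d → ℤ // k ≠ 0},
        ENNReal.ofReal (((1 + ‖η + matVec A (zVec (k : Fin d → ℤ))‖) ^ (d + 1))⁻¹)
      ≤ ENNReal.ofReal
          (((d : ℝ) + 1) * 2 ^ (3 + 4 * d) * (1 + ‖η‖) *
            max (matOpNorm A⁻¹) (matOpNorm A⁻¹ ^ (d + 1))) := by
  have hlower (k : Fin d → ℤ) (hk : k ≠ 0) : 1 ≤ matOpNorm A⁻¹ * ‖matVec A (zVec k)‖ :=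
    (one_le_norm_zVec hk).trans (norm_le_matOpNorm_inv_mul hA _)
  have hM : 0 ≤ matOpNorm A⁻¹ := by rw [matOpNorm_eq_norm_toEuclideanCLM]; positivity
  have hsum := tsum_ofReal_inv_one_add_norm_pow_le
    (p := fun k : {k : Fin d → ℤ // k ≠ 0} => matVec A (zVec k)) η hM
    (fun k l hkl => by
      simpa only [zVec_sub, matVec_sub] using hlower _ (sub_ne_zero.mpr (Subtype.coe_ne_coe.mpr hkl)))
    (fun k => hlower k k.2)
  rw [finrank_euclideanSpace_fin] at hsum
  refine hsum.trans (ENNReal.ofReal_le_ofReal ?_)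
  gcongr ?_ * _ * _
  calc (4 : ℝ) * 8 ^ d = 2 ^ (3 * d + 2) := by rw [pow_add, pow_mul]; norm_num; ring
    _ ≤ 2 ^ (3 + 4 * d) := pow_le_pow_right₀ one_le_two (by omega)
    _ ≤ (d + 1) * 2 ^ (3 + 4 * d) := le_mul_of_one_le_left (by positivity) (by simp)

end
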